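/- Fix y ∈ ℝ, τ ∈ (0,1) and ν > 0, and define Ψ₀(m) = ∫ [ (1/2)|y − η| + (τ − 1/2)(y − η) ] φ(η; m, ν²) dη. Then for every m ∈ ℝ, the second derivative of Ψ₀ with respect to m equals φ(y; m, ν²). -/

import Mathlib

open MeasureTheory Real Filter

/-- Gaussian density with mean `m` and variance `ν ^ 2`, evaluated at `x`:
`φ(x; m, ν²) = (2πν²)^{-1/2} exp(−(x−m)²/(2ν²))`. -/
noncomputable def gpdf (m ν x : ℝ) : ℝ :=
  (Real.sqrt (2 * Real.pi * ν ^ 2))⁻¹ * Real.exp (-((x - m) ^ 2) / (2 * ν ^ 2))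

/-- Gaussian cumulative distribution function with mean `m` and variance `ν ^ 2`:
`Φ(c; m, ν²) = ∫_{−∞}^{c} φ(η; m, ν²) dη`. -/
noncomputable def gcdf (m ν c : ℝ) : ℝ := ∫ x in Set.Iio c, gpdf m ν x

/-!
Splitting the pinball loss at `η = y` gives
`Ψ₀(m) = ∫_{η > y} (η - y) φ(η; m, ν²) dη - τ (m - y)`, and since `-ν² φ(·; m, ν²)` is an
antiderivative of `(η - m) φ(η; m, ν²)` this equals
`ν² φ(y; m, ν²) + (m - y)(1 - Φ(y; m, ν²)) - τ (m - y)`.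
Differentiating in `m`, the terms `± (y - m) φ(y; m, ν²)` cancel, so `Ψ₀'(m) = 1 - τ - Φ(y; m, ν²)`,
and `∂Φ(y; m, ν²)/∂m = -φ(y; m, ν²)` because `Φ(y; m, ν²) = Φ(y - m; 0, ν²)`.
-/

open Set

noncomputable def pinballLoss (τ u : ℝ) : ℝ := (1 / 2) * |u| + (τ - 1 / 2) * u

lemma pinballLoss_sub_eq_indicator (τ y η : ℝ) :
    pinballLoss τ (y - η) = (Ioi y).indicator (fun η => η - y) η - τ * (η - y) := by
  rcases le_or_gt η y with h | h
  · rw [pinballLoss, indicator_of_notMem (notMem_Ioi.mpr h), abs_of_nonneg (sub_nonneg.mpr h)]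
    ring
  · rw [pinballLoss, indicator_of_mem (mem_Ioi.mpr h), abs_sub_comm, abs_of_pos (sub_pos.mpr h)]
    ring

section

variable {ν : ℝ}

lemma gpdf_eq_gaussianPDFReal (m : ℝ) :
    gpdf m ν = ProbabilityTheory.gaussianPDFReal m ⟨ν ^ 2, sq_nonneg ν⟩ := rfl

lemma gpdf_eq_gpdf_zero (m x : ℝ) : gpdf m ν x = gpdf 0 ν (x - m) := by
  simp only [gpdf, sub_zero]

lemma continuous_gpdf (m : ℝ) : Continuous (gpdf m ν) := by
  unfold gpdf; fun_prop

lemma integrable_gpdf (m : ℝ) : Integrable (gpdf m ν) := by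
  rw [gpdf_eq_gaussianPDFReal]; exact ProbabilityTheory.integrable_gaussianPDFReal _ _

lemma integral_gpdf (hν : ν ≠ 0) (m : ℝ) : ∫ x, gpdf m ν x = 1 := by
  rw [gpdf_eq_gaussianPDFReal]
  exact ProbabilityTheory.integral_gaussianPDFReal_eq_one m fun h =>
    pow_ne_zero 2 hν (congrArg NNReal.toReal h)

lemma integrable_sub_mul_gpdf (hν : ν ≠ 0) (m c : ℝ) :
    Integrable (fun x => (x - c) * gpdf m ν x) := by
  have hcentered : Integrable (fun x => (x - m) * gpdf m ν x) := by
    have h := (integrable_mul_exp_neg_mul_sq (b := (2 * ν ^ 2)⁻¹) (by positivity)).const_mul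
      (Real.sqrt (2 * Real.pi * ν ^ 2))⁻¹ |>.comp_sub_right m
    refine h.congr (ae_of_all _ fun x => ?_)
    simp only [gpdf, div_eq_inv_mul, mul_neg, neg_mul]
    ring
  refine (hcentered.add ((integrable_gpdf (ν := ν) m).const_mul (m - c))).congr
    (ae_of_all _ fun x => ?_)
  simp only [Pi.add_apply]
  ring

lemma hasDerivAt_gpdf_zero (hν : ν ≠ 0) (t : ℝ) :
    HasDerivAt (gpdf 0 ν) (-(t / ν ^ 2) * gpdf 0 ν t) t := by
  have hexponent : HasDerivAt (fun t : ℝ => -((t - 0) ^ 2) / (2 * ν ^ 2)) (-(t / ν ^ 2)) t := by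
    refine ((((hasDerivAt_id t).sub_const 0).pow 2).neg.div_const (2 * ν ^ 2)).congr_deriv ?_
    field_simp
    simp
  refine (hexponent.exp.const_mul (Real.sqrt (2 * Real.pi * ν ^ 2))⁻¹).congr_deriv ?_
  unfold gpdf
  ring

lemma hasDerivAt_neg_sq_mul_gpdf (hν : ν ≠ 0) (m x : ℝ) :
    HasDerivAt (fun x => -ν ^ 2 * gpdf m ν x) ((x - m) * gpdf m ν x) x := by
  simp only [gpdf_eq_gpdf_zero m]
  refine (((hasDerivAt_gpdf_zero hν (x - m)).comp x ((hasDerivAt_id x).sub_const m)).const_mul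
    (-ν ^ 2)).congr_deriv ?_
  field_simp

lemma hasDerivAt_gpdf_mean (hν : ν ≠ 0) (m y : ℝ) :
    HasDerivAt (fun m => gpdf m ν y) ((y - m) / ν ^ 2 * gpdf m ν y) m := by
  simp only [gpdf_eq_gpdf_zero _ y]
  refine ((hasDerivAt_gpdf_zero hν (y - m)).comp m ((hasDerivAt_id m).const_sub y)).congr_deriv ?_
  ring

lemma integral_sub_mul_gpdf (hν : ν ≠ 0) (m c : ℝ) : ∫ x, (x - c) * gpdf m ν x = m - c := by
  have hmean : ∫ x, (x - m) * gpdf m ν x = 0 :=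
    integral_eq_zero_of_hasDerivAt_of_integrable (hasDerivAt_neg_sq_mul_gpdf hν m)
      (integrable_sub_mul_gpdf hν m m) ((integrable_gpdf m).const_mul _)
  have hsplit : (fun x => (x - c) * gpdf m ν x)
      = fun x => (x - m) * gpdf m ν x + (m - c) * gpdf m ν x := by
    ext x; ring
  rw [hsplit, integral_add (integrable_sub_mul_gpdf hν m m) ((integrable_gpdf m).const_mul _),
    integral_const_mul, hmean, integral_gpdf hν, zero_add, mul_one]

lemma setIntegral_Ioi_gpdf (hν : ν ≠ 0) (m y : ℝ) :
    ∫ x in Ioi y, gpdf m ν x = 1 - gcdf m ν y := by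
  have h := intervalIntegral.integral_Iic_add_Ioi (b := y) (μ := volume)
    (integrable_gpdf (ν := ν) m).integrableOn (integrable_gpdf (ν := ν) m).integrableOn
  rw [integral_gpdf hν] at h
  rw [gcdf, ← integral_Iic_eq_integral_Iio]
  linarith

lemma setIntegral_Ioi_sub_mul_gpdf (hν : ν ≠ 0) (m y : ℝ) :
    ∫ x in Ioi y, (x - y) * gpdf m ν x = ν ^ 2 * gpdf m ν y + (m - y) * (1 - gcdf m ν y) := by
  have htail : ∫ x in Ioi y, (x - m) * gpdf m ν x = ν ^ 2 * gpdf m ν y := by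
    rw [integral_Ioi_of_hasDerivAt_of_tendsto' (fun x _ => hasDerivAt_neg_sq_mul_gpdf hν m x)
      (integrable_sub_mul_gpdf hν m m).integrableOn
      (tendsto_zero_of_hasDerivAt_of_integrableOn_Ioi (a := y)
        (fun x _ => hasDerivAt_neg_sq_mul_gpdf hν m x)
        (integrable_sub_mul_gpdf hν m m).integrableOn
        ((integrable_gpdf m).const_mul _).integrableOn)]
    ring
  have hsplit : (fun x => (x - y) * gpdf m ν x)
      = fun x => (x - m) * gpdf m ν x + (m - y) * gpdf m ν x := by
    ext x; ring
  rw [hsplit, integral_add (integrable_sub_mul_gpdf hν m m).integrableOn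
    ((integrable_gpdf m).const_mul _).integrableOn, htail, integral_const_mul,
    setIntegral_Ioi_gpdf hν]

lemma gcdf_eq_gcdf_zero (m c : ℝ) : gcdf m ν c = gcdf 0 ν (c - m) := by
  have h := (measurePreserving_sub_right volume m).setIntegral_preimage_emb
    (measurableEmbedding_subRight m) (gpdf 0 ν) (Iio (c - m))
  rw [preimage_sub_const_Iio, sub_add_cancel] at h
  simp only [gcdf, gpdf_eq_gpdf_zero m, ← h]

lemma hasDerivAt_gcdf (m c : ℝ) : HasDerivAt (gcdf m ν) (gpdf m ν c) c := by
  have hint := integrable_gpdf (ν := ν) m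
  have hftc : gcdf m ν = fun c => gcdf m ν 0 + ∫ x in (0 : ℝ)..c, gpdf m ν x := by
    ext c
    rw [gcdf, gcdf, ← integral_Iic_eq_integral_Iio, ← integral_Iic_eq_integral_Iio,
      ← intervalIntegral.integral_Iic_sub_Iic hint.integrableOn hint.integrableOn]
    ring
  rw [hftc]
  exact (intervalIntegral.integral_hasDerivAt_right hint.intervalIntegrable
    ((continuous_gpdf m).stronglyMeasurableAtFilter _ _)
    (continuous_gpdf m).continuousAt).const_add _

lemma hasDerivAt_gcdf_mean (m y : ℝ) :
    HasDerivAt (fun m => gcdf m ν y) (-gpdf m ν y) m := by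
  simp only [gcdf_eq_gcdf_zero _ y]
  refine ((hasDerivAt_gcdf 0 (y - m)).comp m ((hasDerivAt_id m).const_sub y)).congr_deriv ?_
  rw [gpdf_eq_gpdf_zero m]
  ring

lemma integral_pinballLoss_mul_gpdf (hν : ν ≠ 0) (τ y m : ℝ) :
    ∫ η, pinballLoss τ (y - η) * gpdf m ν η
      = ν ^ 2 * gpdf m ν y + (m - y) * (1 - gcdf m ν y) - τ * (m - y) := by
  simp only [pinballLoss_sub_eq_indicator, sub_mul _ (τ * _), mul_assoc τ,
    ← indicator_mul_left]
  rw [integral_sub ((integrable_sub_mul_gpdf hν m y).indicator measurableSet_Ioi)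
      ((integrable_sub_mul_gpdf hν m y).const_mul τ),
    integral_indicator measurableSet_Ioi, setIntegral_Ioi_sub_mul_gpdf hν, integral_const_mul,
    integral_sub_mul_gpdf hν]

lemma hasDerivAt_integral_pinballLoss_mul_gpdf (hν : ν ≠ 0) (τ y m : ℝ) :
    HasDerivAt (fun m => ∫ η, pinballLoss τ (y - η) * gpdf m ν η) (1 - τ - gcdf m ν y) m := by
  simp only [integral_pinballLoss_mul_gpdf hν]
  have hshift : HasDerivAt (fun m : ℝ => m - y) 1 m := (hasDerivAt_id m).sub_const y
  refine ((((hasDerivAt_gpdf_mean hν m y).const_mul (ν ^ 2)).add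
    (hshift.mul ((hasDerivAt_gcdf_mean m y).const_sub 1))).sub
    (hshift.const_mul τ)).congr_deriv ?_
  field_simp
  ring

end

theorem quantile_Psi2_general (y τ ν : ℝ) (hν : 0 < ν) (m : ℝ) :
    HasDerivAt
      (deriv (fun m' => ∫ η, ((1 / 2) * |y - η| + (τ - 1 / 2) * (y - η)) * gpdf m' ν η))
      (gpdf m ν y) m := by
  have hΨ' : deriv (fun m' => ∫ η, pinballLoss τ (y - η) * gpdf m' ν η)
      = fun m' => 1 - τ - gcdf m' ν y :=
    funext fun m' => (hasDerivAt_integral_pinballLoss_mul_gpdf hν.ne' τ y m').deriv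
  show HasDerivAt (deriv fun m' => ∫ η, pinballLoss τ (y - η) * gpdf m' ν η) _ m
  rw [hΨ']
  exact ((hasDerivAt_gcdf_mean m y).const_sub (1 - τ)).congr_deriv (neg_neg _)

theorem quantile_Psi2 (y τ ν : ℝ) (hτ : τ ∈ Set.Ioo (0 : ℝ) 1) (hν : 0 < ν) (m : ℝ) :
    HasDerivAt
      (deriv (fun m' => ∫ η, ((1 / 2) * |y - η| + (τ - 1 / 2) * (y - η)) * gpdf m' ν η))
      (gpdf m ν y) m :=
  quantile_Psi2_general y τ ν hν m
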